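/- arXiv:2106.09115 — 2 statements merged into one kernel-verified Lean document; each statement's English description precedes it below -/
import Mathlib

section
/- For three groups of sizes n₁, n₂, n₃ ≥ 2 with n = n₁+n₂+n₃, the sum of squared weights η²_{nij} in the Hoeffding decomposition of Bₙ equals Cₙ(n₁,n₂) = 2·C(n,2)·(1 + (1/n)·Σ_{g=1}^{3} (n−n_g)/(2(n_g−1))). -/
open Finset

noncomputable section

/-- The index set of group `g` under the group assignment `grp`. -/
def Gset {n : ℕ} (grp : Fin n → Fin 3) (g : Fin 3) : Finset (Fin n) :=
  Finset.univ.filter (fun i => grp i = g)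

/-- The size `n_g` of group `g`. -/
def ng {n : ℕ} (grp : Fin n → Fin 3) (g : Fin 3) : ℕ := (Gset grp g).card

/-- Hoeffding weight `η_{nij}`: equals `1` if `i, j` lie in different groups and
`−(n−n_g)/(n_g−1)` if both lie in group `g`. -/
def eta {n : ℕ} (grp : Fin n → Fin 3) (i j : Fin n) : ℝ :=
  if grp i = grp j then
    -(((n : ℝ) - (ng grp (grp i) : ℝ)) / ((ng grp (grp i) : ℝ) - 1))
  else 1

/-- For three groups of sizes `n₁, n₂, n₃ ≥ 2`, the sum of squared Hoeffding weights is
`Σ_{i<j} η²_{nij} = 2·C(n,2)·(1 + (1/n)·Σ_g (n−n_g)/(2(n_g−1)))`. -/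
theorem sum_eta_sq {n : ℕ} (grp : Fin n → Fin 3)
    (hsize : ∀ g, 2 ≤ ng grp g) :
    (∑ i : Fin n, ∑ j : Fin n, if i < j then (eta grp i j) ^ 2 else 0) =
      2 * (n.choose 2 : ℝ) *
        (1 + (1 / (n : ℝ)) *
          ∑ g : Fin 3, ((n : ℝ) - (ng grp g : ℝ)) / (2 * ((ng grp g : ℝ) - 1))) := by
  classical
  set m : Fin 3 → ℝ := fun g => (ng grp g : ℝ) with hm
  set c : Fin 3 → ℝ := fun g => ((n : ℝ) - m g) / (m g - 1) with hc
  have hm2 : ∀ g, (2 : ℝ) ≤ m g := fun g => by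
    show (2 : ℝ) ≤ ((ng grp g : ℕ) : ℝ); exact_mod_cast hsize g
  have hm1 : ∀ g, m g - 1 ≠ 0 := fun g => by have := hm2 g; intro h; linarith
  -- n is the sum of group sizes
  have hnn : n = ∑ g : Fin 3, ng grp g := by
    have := Finset.card_eq_sum_card_fiberwise
      (f := grp) (s := (Finset.univ : Finset (Fin n))) (t := Finset.univ)
      (fun x _ => Finset.mem_univ _)
    simpa [ng, Gset, Finset.card_univ] using this
  have hn : (n : ℝ) = m 0 + m 1 + m 2 := by
    show (n : ℝ) = ((ng grp 0 : ℕ) : ℝ) + ((ng grp 1 : ℕ) : ℝ) + ((ng grp 2 : ℕ) : ℝ)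
    conv_lhs => rw [hnn]
    push_cast [Fin.sum_univ_three]; ring
  set f : Fin n → Fin n → ℝ := fun i j => (eta grp i j) ^ 2 with hf
  have hsymm : ∀ i j, f i j = f j i := by
    intro i j
    simp only [hf, eta]
    by_cases h : grp i = grp j
    · rw [if_pos h, if_pos h.symm, h]
    · rw [if_neg h, if_neg (Ne.symm h)]
  have heta2 : ∀ i j, f i j =
      (if grp j = grp i then (1 : ℝ) else 0) * (c (grp i)) ^ 2 +
      (1 - (if grp j = grp i then (1 : ℝ) else 0)) := by
    intro i j
    simp only [hf, eta]
    by_cases h : grp i = grp j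
    · rw [if_pos h, if_pos h.symm, neg_sq]; simp [hc, hm]
    · rw [if_neg h, if_neg (Ne.symm h)]; norm_num
  -- counting within group of i
  have hcount : ∀ i, (∑ j : Fin n, if grp j = grp i then (1 : ℝ) else 0) = m (grp i) := by
    intro i
    rw [Finset.sum_boole]
    simp [hm, ng, Gset]
  -- row sums
  have hrow : ∀ i, (∑ j : Fin n, f i j) =
      m (grp i) * (c (grp i)) ^ 2 + ((n : ℝ) - m (grp i)) := by
    intro i
    rw [Finset.sum_congr rfl (fun j _ => heta2 i j), Finset.sum_add_distrib,
      Finset.sum_sub_distrib, ← Finset.sum_mul, hcount]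
    simp [Finset.card_univ]
  have hdiag : ∀ i, f i i = (c (grp i)) ^ 2 := by
    intro i
    rw [heta2 i i, if_pos rfl]; ring
  -- fiberwise summation
  have hfiber : ∀ F : Fin 3 → ℝ, (∑ i : Fin n, F (grp i)) = ∑ g : Fin 3, m g * F g := by
    intro F
    rw [← Finset.sum_fiberwise_of_maps_to (g := grp) (t := (Finset.univ : Finset (Fin 3)))
      (fun x _ => Finset.mem_univ _) (fun i => F (grp i))]
    refine Finset.sum_congr rfl fun g _ => ?_
    rw [Finset.sum_congr rfl (fun i hi => by rw [(Finset.mem_filter.mp hi).2]),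
      Finset.sum_const, nsmul_eq_mul]
    simp [hm, ng, Gset]
  -- symmetrization
  have htri : ∀ i j : Fin n, f i j =
      (if i < j then f i j else 0) + (if j < i then f i j else 0) +
      (if i = j then f i j else 0) := by
    intro i j
    rcases lt_trichotomy i j with h | h | h
    · simp [h, lt_asymm h, h.ne]
    · subst h; simp
    · simp [h, lt_asymm h, h.ne']
  have hB : (∑ i : Fin n, ∑ j : Fin n, if j < i then f i j else 0) =
      (∑ i : Fin n, ∑ j : Fin n, if i < j then f i j else 0) := by
    rw [Finset.sum_comm]
    exact Finset.sum_congr rfl fun i _ => Finset.sum_congr rfl fun j _ => by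
      rw [hsymm i j]
  have hD : (∑ i : Fin n, ∑ j : Fin n, if i = j then f i j else 0) =
      ∑ i : Fin n, f i i := by
    refine Finset.sum_congr rfl fun i _ => ?_
    simp
  have hS : (∑ i : Fin n, ∑ j : Fin n, f i j) =
      2 * (∑ i : Fin n, ∑ j : Fin n, if i < j then f i j else 0) + ∑ i : Fin n, f i i := by
    calc (∑ i : Fin n, ∑ j : Fin n, f i j)
        = (∑ i : Fin n, ∑ j : Fin n, ((if i < j then f i j else 0) +
            (if j < i then f i j else 0) + (if i = j then f i j else 0))) := by
          exact Finset.sum_congr rfl fun i _ => Finset.sum_congr rfl fun j _ => htri i j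
      _ = 2 * (∑ i : Fin n, ∑ j : Fin n, if i < j then f i j else 0) + ∑ i : Fin n, f i i := by
          simp only [Finset.sum_add_distrib]
          rw [hB, hD]; ring
  -- compute the two full sums
  have hSval : (∑ i : Fin n, ∑ j : Fin n, f i j) =
      ∑ g : Fin 3, m g * (m g * (c g) ^ 2 + ((n : ℝ) - m g)) := by
    rw [Finset.sum_congr rfl fun i _ => hrow i,
      hfiber (fun g => m g * (c g) ^ 2 + ((n : ℝ) - m g))]
  have hDval : (∑ i : Fin n, f i i) = ∑ g : Fin 3, m g * (c g) ^ 2 := by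
    rw [Finset.sum_congr rfl fun i _ => hdiag i, hfiber (fun g => (c g) ^ 2)]
  have hA : (∑ i : Fin n, ∑ j : Fin n, if i < j then (eta grp i j) ^ 2 else 0) =
      ((∑ g : Fin 3, m g * (m g * (c g) ^ 2 + ((n : ℝ) - m g))) -
        ∑ g : Fin 3, m g * (c g) ^ 2) / 2 := by
    have : (∑ i : Fin n, ∑ j : Fin n, if i < j then f i j else 0) =
        ((∑ i : Fin n, ∑ j : Fin n, f i j) - ∑ i : Fin n, f i i) / 2 := by
      rw [hS]; ring
    rw [hSval, hDval] at this
    exact this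
  rw [hA, Nat.cast_choose_two]
  simp only [Fin.sum_univ_three, hc]
  rw [hn]
  have h0 := hm1 0; have h1 := hm1 1; have h2 := hm1 2
  have hnz : m 0 + m 1 + m 2 ≠ 0 := by have := hm2 0; have := hm2 1; have := hm2 2; intro h; linarith
  have hmg : ∀ g, (ng grp g : ℝ) = m g := fun g => rfl
  simp only [hmg]
  field_simp
  ring

end
end

section
/- The function Cₙ(n₁,n₂) = 2·C(n,2)·(1 + (1/n)·Σ_{g=1}^{3} (n−n_g)/(2(n_g−1))), with n₃ = n − n₁ − n₂ and all n_g ≥ 2, attains its minimum over group-size configurations when the group sizes are as balanced as possible; in particular, if n is divisible by 3, the minimum is at n₁ = n₂ = n₃ = n/3. -/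
noncomputable section

/-- `Cₙ(n₁,n₂) = 2·C(n,2)·(1 + (1/n)·Σ_g (n−n_g)/(2(n_g−1)))`, with the three group
sizes explicit. -/
def Cn (n n1 n2 n3 : ℕ) : ℝ :=
  2 * (n.choose 2 : ℝ) *
    (1 + (1 / (n : ℝ)) *
      (((n : ℝ) - (n1 : ℝ)) / (2 * ((n1 : ℝ) - 1)) +
       ((n : ℝ) - (n2 : ℝ)) / (2 * ((n2 : ℝ) - 1)) +
       ((n : ℝ) - (n3 : ℝ)) / (2 * ((n3 : ℝ) - 1))))

lemma key_real (m a b c : ℝ) (hm : 2 ≤ m) (ha : 2 ≤ a) (hb : 2 ≤ b) (hc : 2 ≤ c)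
    (hs : a + b + c = 3 * m) :
    (3*m - m)/(2*(m-1)) + (3*m - m)/(2*(m-1)) + (3*m - m)/(2*(m-1)) ≤
    (3*m - a)/(2*(a-1)) + (3*m - b)/(2*(b-1)) + (3*m - c)/(2*(c-1)) := by
  have hA : (0:ℝ) < a - 1 := by linarith
  have hB : (0:ℝ) < b - 1 := by linarith
  have hC : (0:ℝ) < c - 1 := by linarith
  have hM : (0:ℝ) < m - 1 := by linarith
  have h9 : 9 * ((a-1)*(b-1)*(c-1)) ≤
      ((a-1)*(b-1) + (b-1)*(c-1) + (a-1)*(c-1)) * ((a-1)+(b-1)+(c-1)) := by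
    nlinarith [mul_nonneg hA.le (sq_nonneg (b - c)), mul_nonneg hB.le (sq_nonneg (a - c)),
      mul_nonneg hC.le (sq_nonneg (a - b))]
  have hinv : 3/(m-1) ≤ 1/(a-1) + 1/(b-1) + 1/(c-1) := by
    rw [div_add_div _ _ hA.ne' hB.ne', div_add_div _ _ (mul_pos hA hB).ne' hC.ne',
      div_le_div_iff₀ hM (mul_pos (mul_pos hA hB) hC)]
    have hsum3 : a - 1 + (b - 1) + (c - 1) = 3 * (m - 1) := by linarith
    rw [hsum3] at h9
    nlinarith [h9]
  have hmul := mul_le_mul_of_nonneg_left hinv (show (0:ℝ) ≤ (3*m-1)/2 by linarith)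
  have ea : (3*m - a)/(2*(a-1)) = (3*m-1)/2 * (1/(a-1)) - 1/2 := by
    field_simp; ring
  have eb : (3*m - b)/(2*(b-1)) = (3*m-1)/2 * (1/(b-1)) - 1/2 := by
    field_simp; ring
  have ec : (3*m - c)/(2*(c-1)) = (3*m-1)/2 * (1/(c-1)) - 1/2 := by
    field_simp; ring
  have em : (3*m - m)/(2*(m-1)) = (3*m-1)/2 * (1/(m-1)) - 1/2 := by
    field_simp; ring
  have e3 : (3*m-1)/2 * (3/(m-1)) = 3 * ((3*m-1)/2 * (1/(m-1))) := by ring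
  rw [ea, eb, ec, em]
  linarith [hmul, e3.symm.le, e3.le]

/-- If `3 ∣ n`, the function `Cₙ` over group-size configurations `n₁+n₂+n₃ = n`,
all `n_g ≥ 2`, is minimized at the balanced configuration `n₁ = n₂ = n₃ = n/3`. -/
theorem Cn_min_balanced (n : ℕ) (hdvd : 3 ∣ n)
    (n1 n2 n3 : ℕ) (hsum : n1 + n2 + n3 = n)
    (h1 : 2 ≤ n1) (h2 : 2 ≤ n2) (h3 : 2 ≤ n3) :
    Cn n (n / 3) (n / 3) (n / 3) ≤ Cn n n1 n2 n3 := by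
  obtain ⟨m, rfl⟩ := hdvd
  have hm3 : 3 * m / 3 = m := by omega
  rw [hm3]
  have hm : 2 ≤ m := by omega
  unfold Cn
  have hS : (((3*m : ℕ) : ℝ) - (m : ℝ)) / (2 * ((m : ℝ) - 1)) +
      (((3*m : ℕ) : ℝ) - (m : ℝ)) / (2 * ((m : ℝ) - 1)) +
      (((3*m : ℕ) : ℝ) - (m : ℝ)) / (2 * ((m : ℝ) - 1)) ≤
      (((3*m : ℕ) : ℝ) - (n1 : ℝ)) / (2 * ((n1 : ℝ) - 1)) +
      (((3*m : ℕ) : ℝ) - (n2 : ℝ)) / (2 * ((n2 : ℝ) - 1)) +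
      (((3*m : ℕ) : ℝ) - (n3 : ℝ)) / (2 * ((n3 : ℝ) - 1)) := by
    push_cast
    apply key_real
    · exact_mod_cast hm
    · exact_mod_cast h1
    · exact_mod_cast h2
    · exact_mod_cast h3
    · norm_cast
  have h0 : (0:ℝ) ≤ 2 * (((3*m).choose 2 : ℕ) : ℝ) := by positivity
  have h0' : (0:ℝ) ≤ 1 / (((3*m : ℕ)) : ℝ) := by positivity
  exact mul_le_mul_of_nonneg_left
    (add_le_add_right (mul_le_mul_of_nonneg_left hS h0') 1) h0
end
end
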